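/- arXiv:2007.14478 — 6 statements merged into one kernel-verified Lean document; each statement's English description precedes it below -/
import Mathlib

section
/- Let m ≥ 1 and 1 ≤ k ≤ m. The combinatorial matrix M_{[m,k]} ∈ ℝ^{m × C(m,k)}, whose columns are all 0-1 vectors with exactly k ones, maps the standard probability simplex Δ ⊂ ℝ^{C(m,k)} onto the polytope {α ∈ ℝ^m : 0 ≤ α_i ≤ 1 for all i, Σ_i α_i = k}. That is, for every α in this polytope there exists a probability vector p with M_{[m,k]} p = α. -/
/-!
The image of the simplex under `M_{[m,k]}` is compact and convex and contains every column of
`M_{[m,k]}`, so by Krein–Milman it suffices that every extreme point of the hypersimplex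
`{α ∈ [0,1]^m : Σ α_i = k}` is a 0-1 vector, i.e. a column. If `α` had a coordinate strictly
between 0 and 1, integrality of `k` would force a second one, and moving mass `±ε` between the
two would exhibit `α` as the midpoint of two points of the hypersimplex.
-/

open Finset

def hypersimplex (ι : Type*) [Fintype ι] (k : ℕ) : Set (ι → ℝ) :=
  Set.univ.pi (fun _ ↦ Set.Icc 0 1) ∩ {α | ∑ i, α i = k}

def combinatorialMatrix (ι : Type*) [DecidableEq ι] (k : ℕ) :
    Matrix ι {S : Finset ι // #S = k} ℝ :=
  fun i S ↦ if i ∈ S.1 then 1 else 0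

lemma sum_eq_card_filter_of_forall_eq_zero_or_eq_one {ι : Type*} {s : Finset ι} {α : ι → ℝ}
    (hα : ∀ i ∈ s, α i = 0 ∨ α i = 1) :
    ∑ i ∈ s, α i = #{i ∈ s | α i = 1} := by
  classical
  rw [natCast_card_filter]
  refine sum_congr rfl fun i hi ↦ ?_
  rcases hα i hi with h | h <;> simp [h]

namespace hypersimplex

variable {ι : Type*} [Fintype ι] {k : ℕ} {α : ι → ℝ}

lemma isCompact : IsCompact (hypersimplex ι k) :=
  (isCompact_univ_pi fun _ ↦ isCompact_Icc).inter_right <|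
    isClosed_eq (continuous_finsetSum _ fun i _ ↦ continuous_apply i) continuous_const

lemma convex : Convex ℝ (hypersimplex ι k) :=
  (convex_pi fun _ _ ↦ convex_Icc 0 1).inter <|
    convex_hyperplane ⟨fun _ _ ↦ sum_add_distrib, fun _ _ ↦ (mul_sum _ _ _).symm⟩ _

lemma eq_zero_or_eq_one_of_notMem_Ioo (hα : α ∈ hypersimplex ι k) {i : ι}
    (hi : α i ∉ Set.Ioo 0 1) : α i = 0 ∨ α i = 1 := by
  have : α i ∈ Set.Icc 0 1 \ Set.Ioo 0 1 := ⟨hα.1 i trivial, hi⟩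
  simpa [Set.Icc_sdiff_Ioo_same] using this

lemma add_smul_single_sub_single_mem [DecidableEq ι] (hα : α ∈ hypersimplex ι k)
    {i j : ι} (hij : i ≠ j) {t : ℝ} (hi : α i + t ∈ Set.Icc 0 1) (hj : α j - t ∈ Set.Icc 0 1) :
    α + t • (Pi.single i 1 - Pi.single j 1) ∈ hypersimplex ι k := by
  refine ⟨fun l _ ↦ ?_, ?_⟩
  · rcases eq_or_ne l i with rfl | hli
    · simpa [hij] using hi
    rcases eq_or_ne l j with rfl | hlj
    · simpa [hli, sub_eq_add_neg] using hj
    simpa [hli, hlj] using hα.1 l trivial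
  · simpa [sum_add_distrib, mul_sub, sum_sub_distrib, ← mul_sum] using hα.2

lemma exists_ne_mem_Ioo (hα : α ∈ hypersimplex ι k) {i : ι} (hi : α i ∈ Set.Ioo 0 1) :
    ∃ j ≠ i, α j ∈ Set.Ioo 0 1 := by
  classical
  -- otherwise `α i = k - #{j ≠ i | α j = 1}` would be an integer
  by_contra! h
  have hsum : ∑ j, α j = k := hα.2
  rw [← add_sum_erase _ _ (mem_univ i), sum_eq_card_filter_of_forall_eq_zero_or_eq_one
    fun j hj ↦ eq_zero_or_eq_one_of_notMem_Ioo hα (h j (ne_of_mem_erase hj))] at hsum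
  have h0 : (#{j ∈ univ.erase i | α j = 1} : ℝ) < k := by linarith [hi.1]
  have h1 : (k : ℝ) < #{j ∈ univ.erase i | α j = 1} + 1 := by linarith [hi.2]
  norm_cast at h0 h1
  omega

lemma notMem_Ioo_of_mem_extremePoints (hα : α ∈ (hypersimplex ι k).extremePoints ℝ) (i : ι) :
    α i ∉ Set.Ioo 0 1 := by
  classical
  intro hi
  obtain ⟨j, hji, hj⟩ := exists_ne_mem_Ioo hα.1 hi
  obtain ⟨ε, hε, hεi, hεi', hεj, hεj'⟩ :
      ∃ ε > 0, ε ≤ α i ∧ ε ≤ 1 - α i ∧ ε ≤ α j ∧ ε ≤ 1 - α j :=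
    ⟨min (min (α i) (1 - α i)) (min (α j) (1 - α j)),
      lt_min (lt_min hi.1 (sub_pos.2 hi.2)) (lt_min hj.1 (sub_pos.2 hj.2)),
      (min_le_left _ _).trans (min_le_left _ _), (min_le_left _ _).trans (min_le_right _ _),
      (min_le_right _ _).trans (min_le_left _ _), (min_le_right _ _).trans (min_le_right _ _)⟩
  set d : ι → ℝ := Pi.single i 1 - Pi.single j 1
  have hplus : α + ε • d ∈ hypersimplex ι k :=
    add_smul_single_sub_single_mem hα.1 hji.symm ⟨by linarith, by linarith⟩
      ⟨by linarith, by linarith⟩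
  have hminus : α + (-ε) • d ∈ hypersimplex ι k :=
    add_smul_single_sub_single_mem hα.1 hji.symm ⟨by linarith, by linarith⟩
      ⟨by linarith, by linarith⟩
  have hmid : α ∈ openSegment ℝ (α + ε • d) (α + (-ε) • d) :=
    ⟨1 / 2, 1 / 2, by norm_num, by norm_num, by norm_num, by module⟩
  have hαi := congrFun (hα.2 hplus hminus hmid) i
  exact hε.ne' (by simpa [d, hji.symm] using hαi)

lemma mem_range_col_of_mem_extremePoints [DecidableEq ι]
    (hα : α ∈ (hypersimplex ι k).extremePoints ℝ) :
    α ∈ Set.range (combinatorialMatrix ι k).col := by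
  classical
  have h01 (i : ι) : α i = 0 ∨ α i = 1 :=
    eq_zero_or_eq_one_of_notMem_Ioo hα.1 (notMem_Ioo_of_mem_extremePoints hα i)
  have hcard : #{i | α i = 1} = k := by
    have hsum : ∑ i, α i = k := hα.1.2
    rw [sum_eq_card_filter_of_forall_eq_zero_or_eq_one fun i _ ↦ h01 i] at hsum
    exact_mod_cast hsum
  refine ⟨⟨_, hcard⟩, funext fun i ↦ ?_⟩
  rcases h01 i with h | h <;> simp [combinatorialMatrix, h]

end hypersimplex

theorem combinatorialMatrix_mulVec_surjOn {ι : Type*} [Fintype ι] [DecidableEq ι] (k : ℕ) :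
    Set.SurjOn (combinatorialMatrix ι k).mulVec (stdSimplex ℝ _) (hypersimplex ι k) := by
  set M := combinatorialMatrix ι k
  have hclosed : IsClosed (M.mulVec '' stdSimplex ℝ _) :=
    ((isCompact_stdSimplex _ _).image (continuous_const.matrix_mulVec continuous_id)).isClosed
  have hconvex : Convex ℝ (M.mulVec '' stdSimplex ℝ _) :=
    (convex_stdSimplex ℝ _).linear_image M.mulVecLin
  rw [Set.SurjOn, ← closure_convexHull_extremePoints hypersimplex.isCompact hypersimplex.convex]
  refine closure_minimal (convexHull_min ?_ hconvex) hclosed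
  intro α hα
  obtain ⟨S, rfl⟩ := hypersimplex.mem_range_col_of_mem_extremePoints hα
  exact ⟨Pi.single S 1, single_mem_stdSimplex ℝ S, M.mulVec_single_one S⟩

theorem stmt_2_general (m k : ℕ)
    (α : Fin m → ℝ) (hα : ∀ i, 0 ≤ α i ∧ α i ≤ 1) (hsum : ∑ i, α i = k) :
    ∃ p : {S : Finset (Fin m) // S.card = k} → ℝ,
      (∀ S, 0 ≤ p S) ∧ (∑ S, p S = 1) ∧
      ∀ i, (∑ S : {S : Finset (Fin m) // S.card = k},
        p S * (if i ∈ S.1 then (1 : ℝ) else 0)) = α i := by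
  obtain ⟨p, ⟨hp0, hp1⟩, hpα⟩ := combinatorialMatrix_mulVec_surjOn k ⟨fun i _ ↦ hα i, hsum⟩
  refine ⟨p, hp0, hp1, fun i ↦ ?_⟩
  rw [← hpα]
  simp only [Matrix.mulVec, dotProduct, combinatorialMatrix, mul_comm]

/-- The combinatorial matrix `M_{[m,k]}` (columns = indicators of `k`-subsets)
maps the probability simplex onto `{α : 0 ≤ α_i ≤ 1, Σ α_i = k}`. -/
theorem stmt_2 (m k : ℕ) (hm : 1 ≤ m) (hk1 : 1 ≤ k) (hk2 : k ≤ m)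
    (α : Fin m → ℝ) (hα : ∀ i, 0 ≤ α i ∧ α i ≤ 1) (hsum : ∑ i, α i = k) :
    ∃ p : {S : Finset (Fin m) // S.card = k} → ℝ,
      (∀ S, 0 ≤ p S) ∧ (∑ S, p S = 1) ∧
      ∀ i, (∑ S : {S : Finset (Fin m) // S.card = k},
        p S * (if i ∈ S.1 then (1 : ℝ) else 0)) = α i :=
  stmt_2_general m k α hα hsum
end

section
/- Let m ≥ 1, targets with costs 0 < φ_1 ≤ φ_2 ≤ ⋯ ≤ φ_m, and integers 1 ≤ k_a ≤ m and 1 ≤ k_d ≤ m. Define the feasible set F = {α ∈ ℝ^m : 0 ≤ α_i ≤ 1, Σ α_i = k_a} and the objective f(α) = the sum of the m − k_d smallest values among α_1 φ_1, …, α_m φ_m. Then there exists a maximizer α* of f over F satisfying the sortedness property: α*_i φ_i ≥ α*_j φ_j whenever i > j. -/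
/-- There is a maximizer of `f(α) = ` sum of the `m − k_d` smallest values of
`{α_l φ_l}` over `F = {α : 0 ≤ α_i ≤ 1, Σ α_i = k_a}` that is sorted:
`α*_i φ_i ≥ α*_j φ_j` whenever `i ≥ j`. -/
theorem stmt_4 (m ka kd : ℕ) (hm : 1 ≤ m) (hka : 1 ≤ ka ∧ ka ≤ m) (hkd : 1 ≤ kd ∧ kd ≤ m)
    (φ : Fin m → ℝ) (hφpos : ∀ i, 0 < φ i) (hφmono : Monotone φ)
    (F : Set (Fin m → ℝ))
    (hF : F = {α | (∀ i, 0 ≤ α i ∧ α i ≤ 1) ∧ ∑ i, α i = (ka : ℝ)})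
    (hne : ((Finset.univ : Finset (Fin m)).powersetCard (m - kd)).Nonempty)
    (f : (Fin m → ℝ) → ℝ)
    (hf : f = fun α => (Finset.univ.powersetCard (m - kd)).inf' hne
      (fun T => ∑ l ∈ T, α l * φ l)) :
    ∃ a ∈ F, (∀ α ∈ F, f α ≤ f a) ∧ ∀ i j : Fin m, j ≤ i → a j * φ j ≤ a i * φ i := by
  -- continuity of f
  have hfc : Continuous f := by
    rw [hf]
    exact Continuous.finset_inf'_apply hne fun T _ =>
      continuous_finset_sum _ fun l _ => (continuous_apply l).mul continuous_const
  -- F is closed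
  have hFclosed : IsClosed F := by
    rw [hF]
    have h1 : IsClosed {α : Fin m → ℝ | ∀ i, 0 ≤ α i ∧ α i ≤ 1} := by
      have : {α : Fin m → ℝ | ∀ i, 0 ≤ α i ∧ α i ≤ 1}
          = ⋂ i, ((fun α : Fin m → ℝ => α i) ⁻¹' Set.Icc 0 1) := by
        ext α; simp [Set.mem_Icc]
      rw [this]
      exact isClosed_iInter fun i => isClosed_Icc.preimage (continuous_apply i)
    have h2 : IsClosed {α : Fin m → ℝ | ∑ i, α i = (ka : ℝ)} :=
      isClosed_eq (continuous_finset_sum _ fun i _ => continuous_apply i) continuous_const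
    exact h1.inter h2
  -- F is compact
  have hFcompact : IsCompact F := by
    refine (isCompact_univ_pi (fun _ : Fin m => isCompact_Icc (a := (0:ℝ)) (b := 1))).of_isClosed_subset
      hFclosed ?_
    intro α hα
    rw [hF] at hα
    intro i _
    exact Set.mem_Icc.2 (hα.1 i)
  -- F is nonempty
  have hFne : F.Nonempty := by
    refine ⟨fun _ => (ka : ℝ) / m, ?_⟩
    rw [hF]
    have hm0 : (0:ℝ) < m := by exact_mod_cast hm
    constructor
    · intro i
      constructor
      · positivity
      · rw [div_le_one hm0]; exact_mod_cast hka.2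
    · rw [Finset.sum_const, Finset.card_univ, Fintype.card_fin, nsmul_eq_mul]
      field_simp
  -- set of maximizers of f
  set M : Set (Fin m → ℝ) := F ∩ {a | ∀ α ∈ F, f α ≤ f a} with hM
  have hMne : M.Nonempty := by
    obtain ⟨a, haF, hamax⟩ := hFcompact.exists_isMaxOn hFne hfc.continuousOn
    exact ⟨a, haF, fun α hα => hamax hα⟩
  have hMclosed : IsClosed M := by
    have : {a | ∀ α ∈ F, f α ≤ f a} = ⋂ α ∈ F, {a | f α ≤ f a} := by ext; simp
    rw [hM, this]
    exact hFclosed.inter (isClosed_biInter fun α _ => isClosed_le continuous_const hfc)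
  have hMcompact : IsCompact M := hFcompact.of_isClosed_subset hMclosed Set.inter_subset_left
  -- secondary objective
  set g : (Fin m → ℝ) → ℝ := fun a => ∑ l : Fin m, ((l : ℕ) : ℝ) * a l with hg
  have hgc : Continuous g :=
    continuous_finset_sum _ fun l _ => continuous_const.mul (continuous_apply l)
  obtain ⟨a, haM, hamax⟩ := hMcompact.exists_isMaxOn hMne hgc.continuousOn
  obtain ⟨haF, hafmax⟩ := haM
  refine ⟨a, haF, hafmax, ?_⟩
  intro i j hji
  rcases eq_or_lt_of_le hji with h | hji
  · rw [h]
  by_contra hcon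
  push_neg at hcon
  -- basic facts
  have hij : j ≠ i := ne_of_lt hji
  have haF' := haF
  rw [hF] at haF'
  obtain ⟨hbd, hsum⟩ := haF'
  have hφji : φ j ≤ φ i := hφmono (le_of_lt hji)
  have hai0 : 0 ≤ a i := (hbd i).1
  have haj1 : a j ≤ 1 := (hbd j).2
  have hprod : 0 ≤ a i * φ i := mul_nonneg hai0 (le_of_lt (hφpos i))
  have haj0 : 0 < a j := by
    by_contra h
    push_neg at h
    have : a j * φ j ≤ 0 := mul_nonpos_of_nonpos_of_nonneg h (le_of_lt (hφpos j))
    linarith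
  have hai1 : a i < 1 := by
    by_contra h
    push_neg at h
    have h1 : a j * φ j ≤ φ j := by nlinarith [hφpos j]
    have h2 : φ i ≤ a i * φ i := by nlinarith [hφpos i]
    linarith
  set δ : ℝ := a j * φ j - a i * φ i with hδ
  have hδ0 : 0 < δ := by simp [hδ]; linarith
  set ε : ℝ := min (min (a j) (1 - a i)) (δ / φ j) with hε
  have hε0 : 0 < ε := by
    apply lt_min (lt_min haj0 (by linarith))
    exact div_pos hδ0 (hφpos j)
  have hεaj : ε ≤ a j := le_trans (min_le_left _ _) (min_le_left _ _)
  have hεai : ε ≤ 1 - a i := le_trans (min_le_left _ _) (min_le_right _ _)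
  have hεδ : ε * φ j ≤ δ := by
    have h := min_le_right (min (a j) (1 - a i)) (δ / φ j)
    calc ε * φ j ≤ (δ / φ j) * φ j := by
          apply mul_le_mul_of_nonneg_right h (le_of_lt (hφpos j))
      _ = δ := div_mul_cancel₀ δ (ne_of_gt (hφpos j))
  -- the perturbed point
  set b : Fin m → ℝ := fun l => if l = i then a i + ε else if l = j then a j - ε else a l with hb
  have hbi : b i = a i + ε := by simp [hb]
  have hbj : b j = a j - ε := by simp [hb, hij]
  have hbdiff : ∀ l, b l = a l + ((if l = i then ε else 0) + (if l = j then -ε else 0)) := by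
    intro l
    by_cases h1 : l = i
    · subst h1; simp [hb, hij.symm]
    · by_cases h2 : l = j
      · subst h2; simp [hb, h1]; ring
      · simp [hb, h1, h2]
  have hbF : b ∈ F := by
    rw [hF]
    constructor
    · intro l
      by_cases h1 : l = i
      · subst h1; rw [hbi]; constructor <;> linarith
      · by_cases h2 : l = j
        · subst h2; rw [hbj]; constructor <;> [linarith; linarith [haj1]]
        · simp only [hb, h1, h2, if_false]; exact hbd l
    · rw [Finset.sum_congr rfl fun l _ => hbdiff l]
      simp [Finset.sum_add_distrib, Finset.sum_ite_eq', hsum]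
  -- f b ≥ f a
  have hfafb : f a ≤ f b := by
    conv_rhs => rw [hf]
    apply Finset.le_inf'
    intro T hT
    have hTsum : ∑ l ∈ T, b l * φ l = (∑ l ∈ T, a l * φ l)
        + (if i ∈ T then ε * φ i else 0) - (if j ∈ T then ε * φ j else 0) := by
      have : ∀ l ∈ T, b l * φ l = a l * φ l
          + (if l = i then ε * φ l else 0) + (if l = j then -(ε * φ l) else 0) := by
        intro l _
        rw [hbdiff l]
        by_cases h1 : l = i <;> by_cases h2 : l = j <;>
          simp [h1, h2, hij, hij.symm] <;> ring
      rw [Finset.sum_congr rfl this]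
      rw [Finset.sum_add_distrib, Finset.sum_add_distrib]
      rw [Finset.sum_ite_eq' T i (fun l => ε * φ l), Finset.sum_ite_eq' T j (fun l => -(ε * φ l))]
      by_cases h1 : i ∈ T <;> by_cases h2 : j ∈ T <;> simp [h1, h2] <;> ring
    have hfaT : f a ≤ ∑ l ∈ T, a l * φ l := by
      rw [hf]; exact Finset.inf'_le _ hT
    by_cases h2 : j ∈ T
    · by_cases h1 : i ∈ T
      · rw [hTsum]
        simp only [h1, h2, if_true]
        have : ε * φ j ≤ ε * φ i := mul_le_mul_of_nonneg_left hφji (le_of_lt hε0)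
        linarith
      · -- exchange: T' = insert i (T.erase j)
        set T' : Finset (Fin m) := insert i (T.erase j) with hT'
        have hiT' : i ∉ T.erase j := fun h => h1 (Finset.mem_of_mem_erase h)
        have hT'card : T'.card = T.card := by
          rw [hT', Finset.card_insert_of_notMem hiT', Finset.card_erase_of_mem h2]
          have : 1 ≤ T.card := Finset.card_pos.2 ⟨j, h2⟩
          omega
        have hT'mem : T' ∈ Finset.univ.powersetCard (m - kd) := by
          rw [Finset.mem_powersetCard] at hT ⊢
          exact ⟨Finset.subset_univ _, by rw [hT'card]; exact hT.2⟩
        have hfaT' : f a ≤ ∑ l ∈ T', a l * φ l := by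
          rw [hf]; exact Finset.inf'_le _ hT'mem
        have hT'val : ∑ l ∈ T', a l * φ l
            = (∑ l ∈ T, a l * φ l) - a j * φ j + a i * φ i := by
          rw [hT', Finset.sum_insert hiT', Finset.sum_erase_eq_sub h2]
          ring
        rw [hTsum]
        simp only [h1, h2, if_true, if_false]
        rw [hT'val] at hfaT'
        have : ε * φ j ≤ δ := hεδ
        simp only [hδ] at this
        linarith
    · rw [hTsum]
      simp only [h2, if_false]
      have : 0 ≤ (if i ∈ T then ε * φ i else 0) := by
        split
        · exact mul_nonneg hε0.le (hφpos i).le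
        · exact le_refl 0
      linarith
  -- b is also a maximizer of f, so b ∈ M
  have hbM : b ∈ M := ⟨hbF, fun α hα => le_trans (hafmax α hα) hfafb⟩
  -- but g b > g a, contradiction
  have hgb : g b = g a + ε * ((i : ℕ) : ℝ) - ε * ((j : ℕ) : ℝ) := by
    rw [hg]
    simp only
    rw [Finset.sum_congr rfl fun l (_ : l ∈ Finset.univ) => by rw [hbdiff l]]
    have : ∀ l : Fin m, ((l:ℕ):ℝ) * (a l + ((if l = i then ε else 0) + (if l = j then -ε else 0)))
        = ((l:ℕ):ℝ) * a l + (if l = i then ((l:ℕ):ℝ) * ε else 0)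
          + (if l = j then -(((l:ℕ):ℝ) * ε) else 0) := by
      intro l
      by_cases h1 : l = i <;> by_cases h2 : l = j <;>
        simp [h1, h2, hij, hij.symm] <;> ring
    rw [Finset.sum_congr rfl fun l _ => this l]
    rw [Finset.sum_add_distrib, Finset.sum_add_distrib]
    rw [Finset.sum_ite_eq' Finset.univ i, Finset.sum_ite_eq' Finset.univ j]
    simp; ring
  have hji' : ((j : ℕ) : ℝ) < ((i : ℕ) : ℝ) := by exact_mod_cast hji
  have : g a < g b := by rw [hgb]; nlinarith
  have := hamax hbM
  simp only [Set.mem_setOf_eq] at this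
  linarith
end

section
/- Let 0 < φ_1 ≤ ⋯ ≤ φ_m, integers 1 ≤ k_a, k_d ≤ m, and let f(α) = Σ of the (m − k_d) smallest values of {α_l φ_l} over F = {α : 0 ≤ α_i ≤ 1, Σ α_i = k_a}. Then there exists a maximizer α* of f over F and indices s, r with 1 ≤ s ≤ max(k_a, m − k_d) and 0 ≤ r ≤ s − 1 such that: α*_m φ_m = ⋯ = α*_s φ_s > α*_{s−1} φ_{s−1} ≥ ⋯ ≥ α*_{s−r} φ_{s−r}, and α*_{s−r−1} = ⋯ = α*_1 = 0. -/
/-!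
With `p = α * φ` and `k = m - k_d`, `f α` is the sum of the `k` smallest entries of `p`. For every
level `t` it dominates `k t - ∑ (t - p i)⁺`, with equality at a suitable `t ≥ 0`. For fixed `t` this
bound is maximised over `F` by pouring the budget into the targets from the top down, each up to
`min 1 (t / φ i)`, or, if that does not exhaust the budget, by water-filling to a level `c ≥ t`;
both give a nondecreasing profile `α i * φ i`. Taking the smallest level `t` that still certifies
the optimal value, the greedy profile has fewer than `k` entries below `t`, since otherwise
lowering `t` would not decrease the bound; in the water-filling case every entry below the top
value is a full target, so there are fewer than `k_a` of them.
-/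

open Finset

section SumOfSmallest

variable {ι : Type*} [Fintype ι]

def sumOfSmallest (k : ℕ) (p : ι → ℝ)
    (h : (univ.powersetCard k : Finset (Finset ι)).Nonempty) : ℝ :=
  (univ.powersetCard k).inf' h fun T => ∑ l ∈ T, p l

def levelBound (k : ℕ) (p : ι → ℝ) (t : ℝ) : ℝ :=
  k * t - ∑ i, max (t - p i) 0

variable {k : ℕ} {p : ι → ℝ} {h : (univ.powersetCard k : Finset (Finset ι)).Nonempty}

lemma levelBound_le_sumOfSmallest (t : ℝ) : levelBound k p t ≤ sumOfSmallest k p h := by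
  refine le_inf' _ _ fun T hT => ?_
  rw [mem_powersetCard_univ] at hT
  have hT_le : ∑ i ∈ T, max (t - p i) 0 ≤ ∑ i, max (t - p i) 0 :=
    sum_le_univ_sum_of_nonneg fun i => le_max_right _ _
  have hsum : (k : ℝ) * t - ∑ i ∈ T, max (t - p i) 0 ≤ ∑ i ∈ T, p i := by
    rw [← hT, ← nsmul_eq_mul, ← sum_const, ← sum_sub_distrib]
    exact sum_le_sum fun i _ => by linarith [le_max_left (t - p i) 0]
  unfold levelBound
  linarith

lemma exists_sumOfSmallest_le_levelBound (hp : ∀ i, 0 ≤ p i) :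
    ∃ t, 0 ≤ t ∧ sumOfSmallest k p h ≤ levelBound k p t := by
  classical
  obtain ⟨T, hT, hTmin⟩ := exists_mem_eq_inf' h fun T => ∑ l ∈ T, p l
  rw [mem_powersetCard_univ] at hT
  rcases T.eq_empty_or_nonempty with rfl | hTne
  · refine ⟨0, le_rfl, le_of_eq ?_⟩
    simp [sumOfSmallest, levelBound, ← hT, hp]
  obtain ⟨j, hj, hjmax⟩ := T.exists_max_image p hTne
  -- `T` minimizes the sum, so swapping its largest element `j` for any outside `i` cannot help
  have hout : ∀ i ∉ T, p j ≤ p i := by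
    intro i hi
    have hswap : sumOfSmallest k p h ≤ ∑ l ∈ insert i (T.erase j), p l := by
      refine inf'_le _ ?_
      rw [mem_powersetCard_univ, card_insert_of_notMem (fun hi' => hi (mem_of_mem_erase hi')),
        card_erase_of_mem hj, hT]
      have := hT ▸ hTne.card_pos
      omega
    rw [sum_insert (fun hi' => hi (mem_of_mem_erase hi')), sum_erase_eq_sub hj] at hswap
    unfold sumOfSmallest at hswap
    linarith
  refine ⟨p j, hp j, le_of_eq ?_⟩
  have hin : ∑ i ∈ T, max (p j - p i) 0 = ∑ i ∈ T, (p j - p i) :=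
    sum_congr rfl fun i hi => max_eq_left (by linarith [hjmax i hi])
  have hout' : ∑ i ∈ Tᶜ, max (p j - p i) 0 = 0 :=
    sum_eq_zero fun i hi => max_eq_right (by linarith [hout i (mem_compl.mp hi)])
  rw [levelBound, ← sum_add_sum_compl T, hin, hout', sum_sub_distrib, sum_const, hT,
    nsmul_eq_mul, sumOfSmallest, hTmin]
  ring

lemma exists_levelBound_ge_of_le_card {t : ℝ} (ht : 0 < t) (hk : k ≤ #{i | p i < t}) :
    ∃ s, 0 ≤ s ∧ s < t ∧ levelBound k p t ≤ levelBound k p s := by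
  classical
  set B : Finset ℝ := insert 0 (image p {i | p i < t})
  set s := B.max' (insert_nonempty _ _)
  have hs0 : 0 ≤ s := le_max' _ _ (mem_insert_self _ _)
  have hst : s < t := by
    refine (max'_lt_iff _ _).mpr fun x hx => ?_
    rcases mem_insert.mp hx with rfl | hx
    · exact ht
    · obtain ⟨i, hi, rfl⟩ := mem_image.mp hx
      exact (mem_filter.mp hi).2
  -- no value of `p` lies in `(s, t)`, so each term drops by exactly `t - s` or not at all
  have hterm : ∀ i, max (t - p i) 0 - max (s - p i) 0 = if p i < t then t - s else 0 := by
    intro i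
    split_ifs with hi
    · have : p i ≤ s := le_max' _ _ (mem_insert_of_mem (mem_image_of_mem p (by simpa using hi)))
      rw [max_eq_left (by linarith), max_eq_left (by linarith)]
      ring
    · rw [max_eq_right (by linarith), max_eq_right (by linarith)]
      ring
  have hdiff : levelBound k p t - levelBound k p s = (k - #{i | p i < t}) * (t - s) := by
    have := sum_congr rfl fun i (_ : i ∈ univ) => hterm i
    rw [sum_sub_distrib, sum_ite, sum_const_zero, sum_const, nsmul_eq_mul] at this
    unfold levelBound
    linear_combination -this
  refine ⟨s, hs0, hst, ?_⟩
  have hk' : (k : ℝ) ≤ #{i | p i < t} := by exact_mod_cast hk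
  have : ((k : ℝ) - #{i | p i < t}) * (t - s) ≤ 0 :=
    mul_nonpos_of_nonpos_of_nonneg (by linarith) (by linarith)
  linarith

lemma exists_minimal_level {φ : ι → ℝ} {F : Set (ι → ℝ)} (hF : IsCompact F) {V t₀ : ℝ}
    {α₀ : ι → ℝ} (hα₀ : α₀ ∈ F) (ht₀ : 0 ≤ t₀)
    (hV : V ≤ levelBound k (α₀ * φ) t₀) :
    ∃ α ∈ F, ∃ t, 0 ≤ t ∧ V ≤ levelBound k (α * φ) t ∧
      ∀ β ∈ F, ∀ s, 0 ≤ s → s < t → levelBound k (β * φ) s < V := by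
  have hcont : Continuous fun q : (ι → ℝ) × ℝ => levelBound k (q.1 * φ) q.2 := by
    unfold levelBound
    fun_prop
  have hK : IsCompact ((F ×ˢ Set.Icc 0 t₀) ∩ {q | V ≤ levelBound k (q.1 * φ) q.2}) :=
    (hF.prod isCompact_Icc).inter_right (isClosed_le continuous_const hcont)
  obtain ⟨⟨α, t⟩, ⟨⟨hα, ht⟩, hVt⟩, hmin⟩ :=
    hK.exists_isMinOn ⟨(α₀, t₀), ⟨hα₀, ht₀, le_rfl⟩, hV⟩ continuous_snd.continuousOn
  refine ⟨α, hα, t, ht.1, hVt, fun β hβ s hs hst => not_le.mp fun hVs => ?_⟩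
  have : t ≤ s := hmin (a := (β, s)) ⟨⟨hβ, hs, hst.le.trans ht.2⟩, hVs⟩
  linarith

end SumOfSmallest

def marginalPolytope (ι : Type*) [Fintype ι] (K : ℝ) : Set (ι → ℝ) :=
  {α | (∀ i, 0 ≤ α i ∧ α i ≤ 1) ∧ ∑ i, α i = K}

lemma isCompact_marginalPolytope (ι : Type*) [Fintype ι] (K : ℝ) :
    IsCompact (marginalPolytope ι K) := by
  have : marginalPolytope ι K = Set.Icc 0 1 ∩ {α | ∑ i, α i = K} := by
    ext α
    simp [marginalPolytope, Pi.le_def, forall_and]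
  rw [this]
  exact isCompact_Icc.inter_right (isClosed_eq (by fun_prop) continuous_const)

lemma marginalPolytope_nonempty (ι : Type*) [Fintype ι] {K : ℝ} (hK0 : 0 ≤ K)
    (hK : K ≤ Fintype.card ι) : (marginalPolytope ι K).Nonempty := by
  refine ⟨fun _ => K / Fintype.card ι,
    fun i => ⟨by positivity, div_le_one_of_le₀ hK (by positivity)⟩, ?_⟩
  rcases eq_or_ne (Fintype.card ι : ℝ) 0 with h | h
  · simp only [sum_const, card_univ, nsmul_eq_mul, h, zero_mul]
    linarith
  · simp [mul_div_cancel₀ _ h]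

lemma exists_nonneg_between {ι : Type*} [Fintype ι] {P Q : ι → Prop} {φ : ι → ℝ}
    (hQ : ∀ j, Q j → 0 ≤ φ j) (h : ∀ i j, P i → Q j → φ i ≤ φ j) :
    ∃ ν, 0 ≤ ν ∧ (∀ i, P i → φ i ≤ ν) ∧ ∀ j, Q j → ν ≤ φ j := by
  classical
  set B : Finset ℝ := insert 0 (image φ {i | P i})
  refine ⟨B.max' (insert_nonempty _ _), le_max' _ _ (mem_insert_self _ _),
    fun i hi => le_max' _ _ (mem_insert_of_mem (mem_image_of_mem φ (by simpa using hi))),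
    fun j hj => max'_le _ _ _ fun x hx => ?_⟩
  rcases mem_insert.mp hx with rfl | hx
  · exact hQ j hj
  · obtain ⟨i, hi, rfl⟩ := mem_image.mp hx
    exact h i j (by simpa using hi) hj

lemma max_sub_mul_subgradient {φ t ν a τ : ℝ} (hφ : 0 < φ) (hau : a ≤ min φ t / φ)
    (hν : 0 ≤ ν) (hlt : a < min φ t / φ → φ ≤ ν) (hpos : 0 < a → ν ≤ φ)
    (hτ0 : 0 ≤ τ) (hτ1 : τ ≤ 1) :
    max (t - a * φ) 0 - ν * (τ - a) ≤ max (t - τ * φ) 0 := by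
  have haφ : a * φ ≤ min φ t := (le_div_iff₀ hφ).mp hau
  have hat : max (t - a * φ) 0 = t - a * φ := max_eq_left (by linarith [min_le_right φ t])
  rw [hat]
  rcases lt_or_ge τ a with hτa | haτ
  · have := hpos (by linarith)
    nlinarith [le_max_left (t - τ * φ) 0]
  rcases hau.lt_or_eq with hlt' | heq
  · nlinarith [hlt hlt', le_max_left (t - τ * φ) 0]
  have haφ' : a * φ = min φ t := by rw [heq, div_mul_cancel₀ _ hφ.ne']
  rcases min_choice φ t with h | h
  · have ha1 : a = 1 := by
      rw [h] at haφ'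
      exact (mul_eq_right₀ hφ.ne').mp haφ'
    obtain rfl : τ = 1 := by linarith
    rw [ha1]
    linarith [le_max_left (t - 1 * φ) 0]
  · rw [h] at haφ'
    nlinarith [le_max_right (t - τ * φ) 0]

section Greedy

variable {m : ℕ}

def tailSum (u : Fin m → ℝ) (n : ℕ) : ℝ := ∑ j : Fin m with n ≤ j.val, u j

-- Budget `K` poured in from the last index down, cell `i` taking at most `u i`.
def greedyFill (K : ℝ) (u : Fin m → ℝ) (i : Fin m) : ℝ :=
  min K (tailSum u i) - min K (tailSum u (i + 1))

variable {u : Fin m → ℝ} {K : ℝ}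

lemma tailSum_zero : tailSum u 0 = ∑ j, u j := by
  simp [tailSum]

lemma tailSum_eq_zero {n : ℕ} (hn : m ≤ n) : tailSum u n = 0 :=
  sum_eq_zero fun j hj => absurd (mem_filter.mp hj).2 (by omega)

lemma tailSum_eq_add (i : Fin m) : tailSum u i = u i + tailSum u (i + 1) := by
  classical
  have : univ.filter (fun j : Fin m => (i : ℕ) ≤ j.val) =
      insert i (univ.filter fun j : Fin m => (i : ℕ) + 1 ≤ j.val) := by
    ext j
    simp only [mem_filter, mem_univ, true_and, mem_insert, Fin.ext_iff]
    omega
  rw [tailSum, this, sum_insert (by simp)]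
  rfl

lemma tailSum_antitone (hu : ∀ i, 0 ≤ u i) : Antitone (tailSum u) := fun n n' hnn' =>
  sum_le_sum_of_subset_of_nonneg (fun j hj => by simp at hj ⊢; omega) fun j _ _ => hu j

lemma sum_greedyFill (hK : 0 ≤ K) : ∑ i, greedyFill K u i = min K (∑ j, u j) := by
  have := Fin.sum_univ_eq_sum_range (fun n => min K (tailSum u n) - min K (tailSum u (n + 1))) m
  rw [show ∑ i, greedyFill K u i = _ from this, sum_range_sub', tailSum_zero,
    tailSum_eq_zero le_rfl, min_eq_right hK, sub_zero]

lemma greedyFill_nonneg (hu : ∀ i, 0 ≤ u i) (i : Fin m) : 0 ≤ greedyFill K u i := by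
  have := tailSum_eq_add (u := u) i
  unfold greedyFill
  linarith [min_le_min_left K (show tailSum u (i + 1) ≤ tailSum u i by linarith [hu i])]

lemma greedyFill_le (hu : ∀ i, 0 ≤ u i) (i : Fin m) : greedyFill K u i ≤ u i := by
  have := hu i
  unfold greedyFill
  rw [tailSum_eq_add i]
  simp only [min_def]
  split_ifs <;> linarith

lemma lt_tailSum_of_greedyFill_lt (hu : ∀ i, 0 ≤ u i) {i : Fin m}
    (hi : greedyFill K u i < u i) : K < tailSum u i := by
  by_contra! h
  have := tailSum_eq_add (u := u) i
  rw [greedyFill, min_eq_right h, min_eq_right (by linarith [hu i])] at hi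
  linarith

lemma tailSum_lt_of_greedyFill_pos (hu : ∀ i, 0 ≤ u i) {i : Fin m} (hi : 0 < greedyFill K u i) :
    tailSum u (i + 1) < K := by
  by_contra! h
  have := tailSum_eq_add (u := u) i
  rw [greedyFill, min_eq_left h, min_eq_left (by linarith [hu i]), sub_self] at hi
  exact hi.false

end Greedy

section Profile

variable {m : ℕ} {φ : Fin m → ℝ} {t K : ℝ}

noncomputable def levelFill (φ : Fin m → ℝ) (t : ℝ) (i : Fin m) : ℝ := min (φ i) t / φ i

lemma levelFill_mul (hφ : ∀ i, 0 < φ i) (i : Fin m) : levelFill φ t i * φ i = min (φ i) t :=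
  div_mul_cancel₀ _ (hφ i).ne'

lemma levelFill_nonneg (hφ : ∀ i, 0 < φ i) (ht : 0 ≤ t) (i : Fin m) : 0 ≤ levelFill φ t i :=
  div_nonneg (le_min (hφ i).le ht) (hφ i).le

lemma levelFill_le_one (hφ : ∀ i, 0 < φ i) (i : Fin m) : levelFill φ t i ≤ 1 :=
  (div_le_one (hφ i)).mpr (min_le_left _ _)

lemma monotone_greedyFill_mul (hφ : ∀ i, 0 < φ i) (hmono : Monotone φ) (ht : 0 ≤ t) :
    Monotone (greedyFill K (levelFill φ t) * φ) := by
  have hu := levelFill_nonneg hφ ht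
  intro i j hij
  simp only [Pi.mul_apply]
  rcases (greedyFill_nonneg hu i).eq_or_lt with h0 | hpos
  · rw [← h0, zero_mul]
    exact mul_nonneg (greedyFill_nonneg hu j) (hφ j).le
  rcases hij.eq_or_lt with rfl | hlt
  · rfl
  -- mass at `i` means the budget ran out below `i`, so every `j > i` is filled to its cap
  have hfull : greedyFill K (levelFill φ t) j = levelFill φ t j := by
    refine le_antisymm (greedyFill_le hu j) (not_lt.mp fun hj => ?_)
    have := tailSum_antitone hu (show i.val + 1 ≤ j.val from hlt)
    linarith [lt_tailSum_of_greedyFill_lt hu hj, tailSum_lt_of_greedyFill_pos hu hpos]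
  calc greedyFill K (levelFill φ t) i * φ i ≤ levelFill φ t i * φ i :=
        mul_le_mul_of_nonneg_right (greedyFill_le hu i) (hφ i).le
    _ = min (φ i) t := levelFill_mul hφ i
    _ ≤ min (φ j) t := min_le_min_right _ (hmono hlt.le)
    _ = greedyFill K (levelFill φ t) j * φ j := by rw [hfull, levelFill_mul hφ]

lemma greedyFill_mul_le (hφ : ∀ i, 0 < φ i) (ht : 0 ≤ t) (i : Fin m) :
    (greedyFill K (levelFill φ t) * φ) i ≤ t :=
  calc greedyFill K (levelFill φ t) i * φ i ≤ levelFill φ t i * φ i :=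
        mul_le_mul_of_nonneg_right (greedyFill_le (levelFill_nonneg hφ ht) i) (hφ i).le
    _ = min (φ i) t := levelFill_mul hφ i
    _ ≤ t := min_le_right _ _

lemma greedyFill_mem_marginalPolytope (hφ : ∀ i, 0 < φ i) (ht : 0 ≤ t) (hK : 0 ≤ K)
    (hKu : K ≤ ∑ i, levelFill φ t i) :
    greedyFill K (levelFill φ t) ∈ marginalPolytope (Fin m) K := by
  have hu := levelFill_nonneg hφ ht
  refine ⟨fun i => ⟨greedyFill_nonneg hu i,
    (greedyFill_le hu i).trans (levelFill_le_one hφ i)⟩, ?_⟩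
  rw [sum_greedyFill hK, min_eq_left hKu]

lemma levelBound_le_greedyFill (hφ : ∀ i, 0 < φ i) (hmono : Monotone φ) (ht : 0 ≤ t)
    (hK : 0 ≤ K) (hKu : K ≤ ∑ i, levelFill φ t i) (k : ℕ)
    {α : Fin m → ℝ} (hα : α ∈ marginalPolytope (Fin m) K) :
    levelBound k (α * φ) t ≤ levelBound k (greedyFill K (levelFill φ t) * φ) t := by
  have hu := levelFill_nonneg hφ ht
  set G := greedyFill K (levelFill φ t)
  -- `ν` acts as the multiplier of the budget constraint: it separates the `φ i` of cells left
  -- below their cap from the `φ j` of cells that received mass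
  have hsep : ∀ i j, G i < levelFill φ t i → 0 < G j → φ i ≤ φ j := by
    intro i j hi hj
    refine hmono (Fin.le_def.mpr (not_lt.mp fun hji => ?_))
    have := tailSum_antitone hu (show j.val + 1 ≤ i.val from hji)
    linarith [lt_tailSum_of_greedyFill_lt hu hi, tailSum_lt_of_greedyFill_pos hu hj]
  obtain ⟨ν, hν0, hνlt, hνpos⟩ := exists_nonneg_between (fun j _ => (hφ j).le) hsep
  have hGsum : ∑ i, G i = K := (greedyFill_mem_marginalPolytope hφ ht hK hKu).2
  suffices ∑ i, max (t - G i * φ i) 0 ≤ ∑ i, max (t - α i * φ i) 0 by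
    simp only [levelBound, Pi.mul_apply]
    linarith
  calc ∑ i, max (t - G i * φ i) 0 = ∑ i, (max (t - G i * φ i) 0 - ν * (α i - G i)) := by
        rw [sum_sub_distrib, ← mul_sum, sum_sub_distrib, hα.2, hGsum, sub_self, mul_zero,
          sub_zero]
    _ ≤ ∑ i, max (t - α i * φ i) 0 := sum_le_sum fun i _ =>
        max_sub_mul_subgradient (hφ i) (greedyFill_le hu i) hν0 (hνlt i) (hνpos i)
          (hα.1 i).1 (hα.1 i).2

lemma exists_levelFill_sum_eq (hφ : ∀ i, 0 < φ i) (ht : 0 ≤ t)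
    (hlt : ∑ i, levelFill φ t i < K) (hKm : K ≤ m) :
    ∃ c, t ≤ c ∧ ∑ i, levelFill φ c i = K := by
  have hcont : Continuous fun c => ∑ i, levelFill φ c i := by
    unfold levelFill
    fun_prop
  have hfull : ∑ i, levelFill φ (t + ∑ j, φ j) i = m := by
    have : ∀ i, levelFill φ (t + ∑ j, φ j) i = 1 := fun i => by
      rw [levelFill, min_eq_left, div_self (hφ i).ne']
      linarith [single_le_sum (fun j _ => (hφ j).le) (mem_univ i)]
    simp [this]
  have hle : t ≤ t + ∑ j, φ j := le_add_of_nonneg_right (sum_nonneg fun j _ => (hφ j).le)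
  obtain ⟨c, hc, hcK⟩ := intermediate_value_Icc hle hcont.continuousOn ⟨hlt.le, hfull ▸ hKm⟩
  exact ⟨c, hc.1, hcK⟩

lemma levelFill_mem_marginalPolytope (hφ : ∀ i, 0 < φ i) (ht : 0 ≤ t)
    (hK : ∑ i, levelFill φ t i = K) : levelFill φ t ∈ marginalPolytope (Fin m) K :=
  ⟨fun i => ⟨levelFill_nonneg hφ ht i, levelFill_le_one hφ i⟩, hK⟩

lemma monotone_levelFill_mul (hφ : ∀ i, 0 < φ i) (hmono : Monotone φ) :
    Monotone (levelFill φ t * φ) := fun i j hij => by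
  simp only [Pi.mul_apply, levelFill_mul hφ]
  exact min_le_min_right _ (hmono hij)

lemma levelBound_le_levelFill (hφ : ∀ i, 0 < φ i) {c : ℝ} (htc : t ≤ c) (k : ℕ)
    {α : Fin m → ℝ} (hα : ∀ i, 0 ≤ α i ∧ α i ≤ 1) :
    levelBound k (α * φ) t ≤ levelBound k (levelFill φ c * φ) t := by
  suffices ∀ i, max (t - min (φ i) c) 0 ≤ max (t - α i * φ i) 0 by
    simp only [levelBound, Pi.mul_apply, levelFill_mul hφ]
    linarith [sum_le_sum fun i (_ : i ∈ univ) => this i]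
  intro i
  rcases le_total (φ i) c with h | h
  · rw [min_eq_left h]
    exact max_le_max_right _ (by nlinarith [hα i, hφ i])
  · rw [min_eq_right h, max_eq_right (by linarith)]
    exact le_max_right _ _

lemma card_lt_sum_levelFill (hφ : ∀ i, 0 < φ i) {c : ℝ} (hc : 0 < c) (j : Fin m) :
    (#{i | (levelFill φ c * φ) i < (levelFill φ c * φ) j} : ℝ) < ∑ i, levelFill φ c i := by
  classical
  set S := ({i | (levelFill φ c * φ) i < (levelFill φ c * φ) j} : Finset (Fin m))
  have hone : ∀ i ∈ S, levelFill φ c i = 1 := by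
    intro i hi
    simp only [S, mem_filter, mem_univ, true_and, Pi.mul_apply, levelFill_mul hφ] at hi
    have : φ i ≤ c := by
      by_contra! h
      rw [min_eq_right h.le] at hi
      linarith [min_le_right (φ j) c]
    rw [levelFill, min_eq_left this, div_self (hφ i).ne']
  have hjS : j ∉ S := by simp [S]
  have hpos : 0 < levelFill φ c j := div_pos (lt_min (hφ j) hc) (hφ j)
  calc (#S : ℝ) = ∑ i ∈ S, levelFill φ c i := by rw [sum_congr rfl hone]; simp
    _ < ∑ i ∈ insert j S, levelFill φ c i := by rw [sum_insert hjS]; linarith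
    _ ≤ ∑ i, levelFill φ c i :=
        sum_le_univ_sum_of_nonneg fun i => levelFill_nonneg hφ hc.le i

lemma exists_monotone_maximizer_levelBound (hφ : ∀ i, 0 < φ i) (hmono : Monotone φ)
    (ht : 0 ≤ t) (hK : 1 ≤ K) (hKm : K ≤ m) (j : Fin m) :
    ∃ β ∈ marginalPolytope (Fin m) K, Monotone (β * φ) ∧
      (∀ α ∈ marginalPolytope (Fin m) K, ∀ k, levelBound k (α * φ) t ≤ levelBound k (β * φ) t) ∧
      ((#{i | (β * φ) i < (β * φ) j} : ℝ) < K ∨ ∀ i, (β * φ) i ≤ t) := by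
  by_cases hKu : K ≤ ∑ i, levelFill φ t i
  · exact ⟨_, greedyFill_mem_marginalPolytope hφ ht (by linarith) hKu,
      monotone_greedyFill_mul hφ hmono ht,
      fun α hα k => levelBound_le_greedyFill hφ hmono ht (by linarith) hKu k hα,
      Or.inr (greedyFill_mul_le hφ ht)⟩
  obtain ⟨c, htc, hcK⟩ := exists_levelFill_sum_eq hφ ht (not_le.mp hKu) hKm
  have hc : 0 < c := by
    refine (ht.trans htc).lt_of_ne fun hc0 => ?_
    have : ∀ i, levelFill φ c i = 0 := fun i => by
      simp [levelFill, ← hc0, min_eq_right (hφ i).le]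
    simp only [this, sum_const_zero] at hcK
    linarith
  exact ⟨_, levelFill_mem_marginalPolytope hφ (ht.trans htc) hcK,
    monotone_levelFill_mul hφ hmono,
    fun α hα k => levelBound_le_levelFill hφ htc k hα.1,
    Or.inl (hcK ▸ card_lt_sum_levelFill hφ hc j)⟩

lemma exists_monotone_maximizer_sumOfSmallest {ka k : ℕ} (hka : 1 ≤ ka) (hkam : ka ≤ m)
    (hφ : ∀ i, 0 < φ i) (hmono : Monotone φ)
    (hne : (univ.powersetCard k : Finset (Finset (Fin m))).Nonempty) (top : Fin m) :
    ∃ a ∈ marginalPolytope (Fin m) ka,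
      (∀ α ∈ marginalPolytope (Fin m) ka,
        sumOfSmallest k (α * φ) hne ≤ sumOfSmallest k (a * φ) hne) ∧
      Monotone (a * φ) ∧ #{i | (a * φ) i < (a * φ) top} < max ka k := by
  have hcompact := isCompact_marginalPolytope (Fin m) ka
  have hcont : Continuous fun α : Fin m → ℝ => sumOfSmallest k (α * φ) hne := by
    unfold sumOfSmallest
    fun_prop
  obtain ⟨α₀, hα₀, hmax⟩ := hcompact.exists_isMaxOn
    (marginalPolytope_nonempty (Fin m) (by positivity) (by simpa using hkam)) hcont.continuousOn
  obtain ⟨t₀, ht₀, hV⟩ := exists_sumOfSmallest_le_levelBound (h := hne)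
    fun i => mul_nonneg (hα₀.1 i).1 (hφ i).le
  obtain ⟨α₁, hα₁, t, ht, hVt, hmin⟩ := exists_minimal_level hcompact hα₀ ht₀ hV
  obtain ⟨β, hβ, hβmono, hβopt, hβcount⟩ :=
    exists_monotone_maximizer_levelBound (K := ka) hφ hmono ht (by exact_mod_cast hka)
      (by exact_mod_cast hkam) top
  have hVβ := hVt.trans (hβopt α₁ hα₁ k)
  refine ⟨β, hβ, fun α hα => (hmax hα).trans (hVβ.trans (levelBound_le_sumOfSmallest t)),
    hβmono, ?_⟩
  rcases hβcount with hlt | hle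
  · have : #{i | (β * φ) i < (β * φ) top} < ka := by exact_mod_cast hlt
    omega
  have ht0 : 0 < t := by
    by_contra! ht0
    have : ∑ i, β i ≤ 0 :=
      sum_nonpos fun i _ => nonpos_of_mul_nonpos_left ((hle i).trans ht0) (hφ i)
    linarith [hβ.2, show (1 : ℝ) ≤ ka by exact_mod_cast hka]
  -- minimality of `t`: with `k` or more entries below `t`, lowering the level would not hurt
  have hbelow : #{i | (β * φ) i < t} < k := by
    by_contra! hk
    obtain ⟨s, hs0, hst, hLs⟩ := exists_levelBound_ge_of_le_card ht0 hk
    exact (hmin β hβ s hs0 hst).not_ge (hVβ.trans hLs)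
  have : #{i | (β * φ) i < (β * φ) top} ≤ #{i | (β * φ) i < t} :=
    card_le_card fun i hi => by
      simp only [mem_filter, mem_univ, true_and] at hi ⊢
      exact hi.trans_le (hle top)
  omega

lemma mem_iff_lt_card_of_isLowerSet {s : Finset (Fin m)} (hs : IsLowerSet (s : Set (Fin m)))
    {i : Fin m} : i ∈ s ↔ i.val < #s := by
  constructor
  · intro hi
    have := card_le_card fun j hj => hs (mem_Iic.mp hj) hi
    rw [Fin.card_Iic] at this
    omega
  · intro hi
    by_contra hi'
    have := card_le_card fun j (hj : j ∈ s) => mem_Iio.mpr (not_le.mp fun hij => hi' (hs hij hj))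
    rw [Fin.card_Iio] at this
    omega

lemma exists_chain_of_monotone {a : Fin m → ℝ} {M : ℕ} (hmono : Monotone (a * φ))
    (top : Fin m) (htop : ∀ i, i ≤ top) (hcount : #{i | (a * φ) i < (a * φ) top} + 1 ≤ M) :
    ∃ s r : ℕ, 1 ≤ s ∧ s ≤ M ∧ r ≤ s - 1 ∧
      (∀ i j : Fin m, s ≤ (j : ℕ) + 1 → j ≤ i → a i * φ i = a j * φ j) ∧
      (∀ i j : Fin m, s - r ≤ (j : ℕ) + 1 → j ≤ i → (i : ℕ) + 1 ≤ s - 1 →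
        a j * φ j ≤ a i * φ i) ∧
      (∀ i t : Fin m, (i : ℕ) + 1 < s → s ≤ (t : ℕ) + 1 → a i * φ i < a t * φ t) ∧
      (∀ i : Fin m, (i : ℕ) + 1 < s - r → a i = 0) := by
  classical
  set S := ({i | (a * φ) i < (a * φ) top} : Finset (Fin m))
  have hmem : ∀ i, i ∈ S ↔ i.val < #S := fun i => mem_iff_lt_card_of_isLowerSet
    (fun i j hji hi => by simpa [S] using (hmono hji).trans_lt (by simpa [S] using hi))
  have htop_eq : ∀ j : Fin m, #S ≤ j.val → (a * φ) j = (a * φ) top := fun j hj =>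
    le_antisymm (hmono (htop j)) (not_lt.mp fun h => by
      have := (hmem j).mp (by simpa [S] using h)
      omega)
  have hlt : ∀ i : Fin m, i.val < #S → (a * φ) i < (a * φ) top := fun i hi => by
    simpa [S] using (hmem i).mpr hi
  refine ⟨#S + 1, #S, by omega, hcount, by omega, ?_, ?_, ?_, ?_⟩
  · intro i j hj hji
    exact (htop_eq i (by have := Fin.le_def.mp hji; omega)).trans (htop_eq j (by omega)).symm
  · intro i j _ hji _
    exact hmono hji
  · intro i t hi ht
    exact (hlt i (by omega)).trans_eq (htop_eq t (by omega)).symm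
  · intro i hi
    omega

end Profile

theorem stmt_6_general (m ka kd : ℕ) (hka : 1 ≤ ka ∧ ka ≤ m)
    (φ : Fin m → ℝ) (hφpos : ∀ i, 0 < φ i) (hφmono : Monotone φ)
    (F : Set (Fin m → ℝ))
    (hF : F = {α | (∀ i, 0 ≤ α i ∧ α i ≤ 1) ∧ ∑ i, α i = (ka : ℝ)})
    (hne : ((Finset.univ : Finset (Fin m)).powersetCard (m - kd)).Nonempty)
    (f : (Fin m → ℝ) → ℝ)
    (hf : f = fun α => (Finset.univ.powersetCard (m - kd)).inf' hne
      (fun T => ∑ l ∈ T, α l * φ l)) :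
    ∃ a ∈ F, (∀ α ∈ F, f α ≤ f a) ∧
      ∃ s r : ℕ, 1 ≤ s ∧ s ≤ max ka (m - kd) ∧ r ≤ s - 1 ∧
        (∀ i j : Fin m, s ≤ (j : ℕ) + 1 → j ≤ i → a i * φ i = a j * φ j) ∧
        (∀ i j : Fin m, s - r ≤ (j : ℕ) + 1 → j ≤ i → (i : ℕ) + 1 ≤ s - 1 →
          a j * φ j ≤ a i * φ i) ∧
        (∀ i t : Fin m, (i : ℕ) + 1 < s → s ≤ (t : ℕ) + 1 → a i * φ i < a t * φ t) ∧
        (∀ i : Fin m, (i : ℕ) + 1 < s - r → a i = 0) := by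
  subst hF hf
  let top : Fin m := ⟨m - 1, by omega⟩
  obtain ⟨a, ha, hmax, hmono, hcount⟩ :=
    exists_monotone_maximizer_sumOfSmallest hka.1 hka.2 hφpos hφmono hne top
  exact ⟨a, ha, hmax, exists_chain_of_monotone hmono top
    (fun i => Fin.le_def.mpr (by simp only [top]; omega)) (by omega)⟩

/-- There is a maximizer `a` of `f` over `F` and indices `s, r` with
`1 ≤ s ≤ max(k_a, m − k_d)`, `0 ≤ r ≤ s − 1`, such that (with paper index `j+1` for `j : Fin m`)
`a_m φ_m = ⋯ = a_s φ_s > a_{s−1} φ_{s−1} ≥ ⋯ ≥ a_{s−r} φ_{s−r}` and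
`a_{s−r−1} = ⋯ = a_1 = 0`. -/
theorem stmt_6 (m ka kd : ℕ) (hm : 1 ≤ m) (hka : 1 ≤ ka ∧ ka ≤ m) (hkd : 1 ≤ kd ∧ kd ≤ m)
    (φ : Fin m → ℝ) (hφpos : ∀ i, 0 < φ i) (hφmono : Monotone φ)
    (F : Set (Fin m → ℝ))
    (hF : F = {α | (∀ i, 0 ≤ α i ∧ α i ≤ 1) ∧ ∑ i, α i = (ka : ℝ)})
    (hne : ((Finset.univ : Finset (Fin m)).powersetCard (m - kd)).Nonempty)
    (f : (Fin m → ℝ) → ℝ)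
    (hf : f = fun α => (Finset.univ.powersetCard (m - kd)).inf' hne
      (fun T => ∑ l ∈ T, α l * φ l)) :
    ∃ a ∈ F, (∀ α ∈ F, f α ≤ f a) ∧
      ∃ s r : ℕ, 1 ≤ s ∧ s ≤ max ka (m - kd) ∧ r ≤ s - 1 ∧
        (∀ i j : Fin m, s ≤ (j : ℕ) + 1 → j ≤ i → a i * φ i = a j * φ j) ∧
        (∀ i j : Fin m, s - r ≤ (j : ℕ) + 1 → j ≤ i → (i : ℕ) + 1 ≤ s - 1 →
          a j * φ j ≤ a i * φ i) ∧
        (∀ i t : Fin m, (i : ℕ) + 1 < s → s ≤ (t : ℕ) + 1 → a i * φ i < a t * φ t) ∧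
        (∀ i : Fin m, (i : ℕ) + 1 < s - r → a i = 0) :=
  stmt_6_general m ka kd hka φ hφpos hφmono F hF hne f hf
end

section
/- Let 0 < φ_1 ≤ ⋯ ≤ φ_m, integers s, r with 1 ≤ s ≤ m, 0 ≤ r ≤ s−1, k_a ≥ 1, c = Σ_{j=s}^m 1/φ_j, and c' = c − 1/φ_s (so c' = Σ_{j=s+1}^m 1/φ_j when s < m). Define δ = k_a − r − c' φ_s and α by: α_j = 0 for j < s−r; α_{s−r} = δ; α_j = 1 for s−r+1 ≤ j ≤ s; α_j = φ_s/φ_j for j > s. If c φ_s ≥ k_a − r > c φ_s − 1, then 0 < δ ≤ 1, Σ_j α_j = k_a, 0 ≤ α_j ≤ 1 for all j, and α_i φ_i ≥ α_j φ_j for all i > j. -/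
/-- Feasibility of the second closed-form candidate attacker marginal:
`α_j = 0` for `j < s−r`, `α_{s−r} = δ = k_a − r − c'φ_s`, `α_j = 1` for `s−r+1 ≤ j ≤ s`,
`α_j = φ_s/φ_j` for `j > s`, where `c' = c − 1/φ_s`. If `c φ_s ≥ k_a − r > c φ_s − 1`,
then `0 < δ ≤ 1`, `Σ α = k_a`, `0 ≤ α ≤ 1`, and `α_i φ_i` is monotone nondecreasing. -/
theorem stmt_9 (m s r ka : ℕ) (hs1 : 1 ≤ s) (hsm : s ≤ m) (hr : r ≤ s - 1) (hka : 1 ≤ ka)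
    (φ : ℕ → ℝ) (hφpos : ∀ j ∈ Finset.Icc 1 m, 0 < φ j)
    (hφmono : ∀ i ∈ Finset.Icc 1 m, ∀ j ∈ Finset.Icc 1 m, i ≤ j → φ i ≤ φ j)
    (c c' : ℝ) (hc : c = ∑ j ∈ Finset.Icc s m, 1 / φ j) (hc' : c' = c - 1 / φ s)
    (δ : ℝ) (hδ : δ = (ka : ℝ) - r - c' * φ s)
    (α : ℕ → ℝ)
    (hα1 : ∀ j, j < s - r → α j = 0)
    (hα2 : α (s - r) = δ)
    (hα3 : ∀ j, s - r + 1 ≤ j → j ≤ s → α j = 1)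
    (hα4 : ∀ j, s < j → j ≤ m → α j = φ s / φ j)
    (hub : (ka : ℝ) - r ≤ c * φ s) (hlb : c * φ s - 1 < (ka : ℝ) - r) :
    (0 < δ ∧ δ ≤ 1) ∧ (∑ j ∈ Finset.Icc 1 m, α j = (ka : ℝ)) ∧
    (∀ j ∈ Finset.Icc 1 m, 0 ≤ α j ∧ α j ≤ 1) ∧
    (∀ i ∈ Finset.Icc 1 m, ∀ j ∈ Finset.Icc 1 m, j ≤ i → α j * φ j ≤ α i * φ i) := by
  set a := s - r with ha
  have ha1 : 1 ≤ a := by omega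
  have has : a ≤ s := by omega
  have hφs : 0 < φ s := hφpos s (by simp [Finset.mem_Icc]; omega)
  have hδ' : δ = (ka : ℝ) - r - c * φ s + 1 := by
    rw [hδ, hc']; field_simp; ring
  have hδpos : 0 < δ := by rw [hδ']; linarith
  have hδle : δ ≤ 1 := by rw [hδ']; linarith
  -- bounds on α
  have hbound : ∀ j ∈ Finset.Icc 1 m, 0 ≤ α j ∧ α j ≤ 1 := by
    intro j hj
    simp only [Finset.mem_Icc] at hj
    rcases lt_trichotomy j a with h | h | h
    · rw [hα1 j h]; norm_num
    · rw [h, hα2]; exact ⟨le_of_lt hδpos, hδle⟩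
    · rcases le_or_gt j s with h2 | h2
      · rw [hα3 j (by omega) h2]; norm_num
      · rw [hα4 j h2 hj.2]
        have hφj : 0 < φ j := hφpos j (by simp [Finset.mem_Icc]; omega)
        have hle : φ s ≤ φ j := hφmono s (by simp [Finset.mem_Icc]; omega)
          j (by simp [Finset.mem_Icc]; omega) (by omega)
        exact ⟨by positivity, by rw [div_le_one hφj]; exact hle⟩
  -- sum computation
  have hsum : ∑ j ∈ Finset.Icc 1 m, α j = (ka : ℝ) := by
    have e1 : Finset.Icc 1 m = Finset.Ioc 0 m := by
      ext x; simp [Finset.mem_Icc, Finset.mem_Ioc]; omega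
    have split1 : (∑ j ∈ Finset.Ioc 0 s, α j) + ∑ j ∈ Finset.Ioc s m, α j
        = ∑ j ∈ Finset.Ioc 0 m, α j :=
      Finset.sum_Ioc_consecutive _ (by omega) hsm
    have split2 : (∑ j ∈ Finset.Ioc 0 a, α j) + ∑ j ∈ Finset.Ioc a s, α j
        = ∑ j ∈ Finset.Ioc 0 s, α j :=
      Finset.sum_Ioc_consecutive _ (by omega) has
    have split3 : (∑ j ∈ Finset.Ioc 0 (a-1), α j) + ∑ j ∈ Finset.Ioc (a-1) a, α j
        = ∑ j ∈ Finset.Ioc 0 a, α j :=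
      Finset.sum_Ioc_consecutive _ (by omega) (by omega)
    have S1 : ∑ j ∈ Finset.Ioc 0 (a-1), α j = 0 := by
      apply Finset.sum_eq_zero
      intro j hj
      simp only [Finset.mem_Ioc] at hj
      exact hα1 j (by omega)
    have e2 : Finset.Ioc (a-1) a = {a} := by
      ext x; simp [Finset.mem_Ioc]; omega
    have S2 : ∑ j ∈ Finset.Ioc (a-1) a, α j = δ := by
      rw [e2, Finset.sum_singleton, hα2]
    have S3 : ∑ j ∈ Finset.Ioc a s, α j = (r : ℝ) := by
      rw [Finset.sum_congr rfl (fun j hj => by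
        simp only [Finset.mem_Ioc] at hj
        exact hα3 j (by omega) hj.2)]
      rw [Finset.sum_const, Nat.card_Ioc]
      have : s - a = r := by omega
      rw [this]; simp
    have S4 : ∑ j ∈ Finset.Ioc s m, α j = c * φ s - 1 := by
      have hcs : c = 1 / φ s + ∑ j ∈ Finset.Ioc s m, 1 / φ j := by
        rw [hc, Finset.Icc_eq_cons_Ioc hsm, Finset.sum_cons]
      rw [Finset.sum_congr rfl (fun j hj => by
        simp only [Finset.mem_Ioc] at hj
        exact hα4 j hj.1 hj.2)]
      have : ∑ j ∈ Finset.Ioc s m, φ s / φ j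
          = φ s * ∑ j ∈ Finset.Ioc s m, 1 / φ j := by
        rw [Finset.mul_sum]
        exact Finset.sum_congr rfl (fun j _ => by ring)
      rw [this]
      have h1 : ∑ j ∈ Finset.Ioc s m, 1 / φ j = c - 1 / φ s := by linarith
      rw [h1]
      field_simp
    rw [e1, ← split1, ← split2, ← split3, S1, S2, S3, S4, hδ']
    ring
  refine ⟨⟨hδpos, hδle⟩, hsum, hbound, ?_⟩
  -- monotonicity of α j * φ j
  intro i hi j hj hji
  simp only [Finset.mem_Icc] at hi hj
  have hφi : 0 < φ i := hφpos i (by simp [Finset.mem_Icc]; omega)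
  have hφj : 0 < φ j := hφpos j (by simp [Finset.mem_Icc]; omega)
  have hφa : 0 < φ a := hφpos a (by simp [Finset.mem_Icc]; omega)
  have hαi := hbound i (by simp [Finset.mem_Icc]; omega)
  have mono := fun (x y : ℕ) (hx : 1 ≤ x) (hy : y ≤ m) (hxy : x ≤ y) =>
    hφmono x (by simp [Finset.mem_Icc]; omega) y (by simp [Finset.mem_Icc]; omega) hxy
  rcases lt_trichotomy j a with h | h | h
  · rw [hα1 j h]
    simp only [zero_mul]
    exact mul_nonneg hαi.1 (le_of_lt hφi)
  · -- j = a
    rw [h, hα2]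
    have hδφ : δ * φ a ≤ φ a := by nlinarith
    rcases lt_trichotomy i a with h2 | h2 | h2
    · omega
    · rw [h2, hα2]
    · rcases le_or_gt i s with h3 | h3
      · rw [hα3 i (by omega) h3, one_mul]
        exact le_trans hδφ (mono a i ha1 (by omega) (by omega))
      · rw [hα4 i h3 hi.2]
        have : φ s / φ i * φ i = φ s := by field_simp
        rw [this]
        exact le_trans hδφ (mono a s ha1 (by omega) (by omega))
  · -- j > a
    rcases le_or_gt j s with h2 | h2
    · rw [hα3 j (by omega) h2, one_mul]
      rcases le_or_gt i s with h3 | h3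
      · rw [hα3 i (by omega) h3, one_mul]
        exact mono j i hj.1 (by omega) hji
      · rw [hα4 i h3 hi.2]
        have : φ s / φ i * φ i = φ s := by field_simp
        rw [this]
        exact mono j s hj.1 (by omega) h2
    · rw [hα4 j h2 hj.2, hα4 i (by omega) hi.2]
      have e1 : φ s / φ j * φ j = φ s := by field_simp
      have e2 : φ s / φ i * φ i = φ s := by field_simp
      rw [e1, e2]
end

section
/- Let 0 < φ_1 ≤ ⋯ ≤ φ_m, integers s, r, k_a, k_d with 1 ≤ s ≤ m, 0 ≤ r ≤ s−1, r + 1 ≤ k_a ≤ r + m − s, 1 ≤ k_d, and c = Σ_{j=s}^m 1/φ_j, i = m − s + 1. Suppose β satisfies β_j = 1 for j ≤ s−1, β_j = (i − k_d)/(c φ_j) for j ≥ s, and suppose c φ_{s−r} ≥ i − k_d ≥ c φ_{s−r−1} (with φ_0 := 0). Then the sum of the k_a largest values among {β_l φ_l : l = 1,…,m} equals (k_a − r)(i − k_d)/c + Σ_{l=s−r}^{s−1} φ_l. -/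
/-- Value of the dual entry `W_{i,i+r}`: under the stated ordering conditions
(with `φ_0 = 0`), the sum of the `k_a` largest values among `{β_l φ_l : l ∈ {1,…,m}}` (taken as
the max over `k_a`-subsets) equals `(k_a − r)(i − k_d)/c + Σ_{l=s−r}^{s−1} φ_l`. -/
theorem stmt_14 (m s r ka kd : ℕ) (hs1 : 1 ≤ s) (hsm : s ≤ m) (hr : r ≤ s - 1)
    (hka1 : r + 1 ≤ ka) (hka2 : ka ≤ r + m - s) (hkd : 1 ≤ kd)
    (φ : ℕ → ℝ) (hφ0 : φ 0 = 0) (hφpos : ∀ j ∈ Finset.Icc 1 m, 0 < φ j)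
    (hφmono : ∀ i ∈ Finset.Icc 1 m, ∀ j ∈ Finset.Icc 1 m, i ≤ j → φ i ≤ φ j)
    (c : ℝ) (hc : c = ∑ j ∈ Finset.Icc s m, 1 / φ j)
    (i : ℕ) (hi : i = m - s + 1)
    (β : ℕ → ℝ)
    (hβ1 : ∀ j, 1 ≤ j → j ≤ s - 1 → β j = 1)
    (hβ2 : ∀ j, s ≤ j → j ≤ m → β j = ((i : ℝ) - kd) / (c * φ j))
    (h1 : (i : ℝ) - kd ≤ c * φ (s - r)) (h2 : c * φ (s - r - 1) ≤ (i : ℝ) - kd)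
    (hne : ((Finset.Icc 1 m).powersetCard ka).Nonempty) :
    ((Finset.Icc 1 m).powersetCard ka).sup' hne (fun S => ∑ l ∈ S, β l * φ l)
      = ((ka : ℝ) - r) * ((i : ℝ) - kd) / c + ∑ l ∈ Finset.Icc (s - r) (s - 1), φ l := by
  classical
  have hrs : r + 1 ≤ s := by omega
  have hpos' : ∀ a : ℕ, 1 ≤ a → a ≤ m → 0 < φ a := fun a u v =>
    hφpos a (Finset.mem_Icc.mpr ⟨u, v⟩)
  have hmono' : ∀ a b : ℕ, 1 ≤ a → a ≤ b → b ≤ m → φ a ≤ φ b := by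
    intro a b ha hab hbm
    exact hφmono a (Finset.mem_Icc.mpr ⟨ha, le_trans hab hbm⟩)
      b (Finset.mem_Icc.mpr ⟨by omega, hbm⟩) hab
  have hcpos : 0 < c := by
    rw [hc]
    apply Finset.sum_pos
    · intro j hj
      rw [Finset.mem_Icc] at hj
      exact one_div_pos.mpr (hpos' j (by omega) hj.2)
    · exact ⟨s, Finset.mem_Icc.mpr ⟨le_refl s, hsm⟩⟩
  set q : ℝ := ((i : ℝ) - kd) / c with hqdef
  have hq1 : q ≤ φ (s - r) := by
    rw [hqdef, div_le_iff₀ hcpos]; linarith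
  have hq2 : φ (s - r - 1) ≤ q := by
    rw [hqdef, le_div_iff₀ hcpos]; linarith
  have hq0 : 0 ≤ q := by
    refine le_trans ?_ hq2
    rcases Nat.eq_zero_or_pos (s - r - 1) with h | h
    · rw [h, hφ0]
    · exact (hpos' _ h (by omega)).le
  have hv1 : ∀ l, 1 ≤ l → l ≤ s - 1 → β l * φ l = φ l := fun l a b => by
    rw [hβ1 l a b, one_mul]
  have hv2 : ∀ l, s ≤ l → l ≤ m → β l * φ l = q := by
    intro l u v
    have hφl : φ l ≠ 0 := (hpos' l (by omega) v).ne'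
    rw [hβ2 l u v, hqdef]
    field_simp
  -- the target as an expression with q
  have htarget : ((ka : ℝ) - r) * ((i : ℝ) - kd) / c + ∑ l ∈ Finset.Icc (s - r) (s - 1), φ l
      = ((ka : ℝ) - r) * q + ∑ l ∈ Finset.Icc (s - r) (s - 1), φ l := by
    rw [hqdef]; ring
  rw [htarget]
  apply le_antisymm
  · -- upper bound
    apply Finset.sup'_le
    intro S hS
    rw [Finset.mem_powersetCard] at hS
    obtain ⟨hSsub, hScard⟩ := hS
    have hSmem : ∀ l ∈ S, 1 ≤ l ∧ l ≤ m := by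
      intro l hl
      have := hSsub hl
      rw [Finset.mem_Icc] at this
      exact this
    set P2 := S.filter (fun l => l < s - r) with hP2
    set P1 := S.filter (fun l => s - r ≤ l ∧ l < s) with hP1
    set PB := S.filter (fun l => s ≤ l) with hPB
    have hd12 : Disjoint P2 P1 := by
      rw [Finset.disjoint_left]
      intro a ha ha'
      rw [hP2, Finset.mem_filter] at ha
      rw [hP1, Finset.mem_filter] at ha'
      omega
    have hd2B : Disjoint (P2 ∪ P1) PB := by
      rw [Finset.disjoint_left]
      intro a ha ha'
      rw [Finset.mem_union, hP2, hP1, Finset.mem_filter, Finset.mem_filter] at ha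
      rw [hPB, Finset.mem_filter] at ha'
      omega
    have hU : P2 ∪ P1 ∪ PB = S := by
      ext l
      simp only [hP2, hP1, hPB, Finset.mem_union, Finset.mem_filter]
      constructor
      · tauto
      · intro h
        by_cases h1 : l < s - r
        · exact Or.inl (Or.inl ⟨h, h1⟩)
        · by_cases h2 : l < s
          · exact Or.inl (Or.inr ⟨h, by omega, h2⟩)
          · exact Or.inr ⟨h, by omega⟩
    have hcards : P2.card + P1.card + PB.card = ka := by
      rw [← hScard, ← hU, Finset.card_union_of_disjoint hd2B,
        Finset.card_union_of_disjoint hd12]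
    have hsum : ∑ l ∈ S, β l * φ l
        = ∑ l ∈ P2, φ l + ∑ l ∈ P1, φ l + (PB.card : ℝ) * q := by
      rw [← hU, Finset.sum_union hd2B, Finset.sum_union hd12]
      congr 1
      · congr 1
        · apply Finset.sum_congr rfl
          intro l hl
          rw [hP2, Finset.mem_filter] at hl
          exact hv1 l (hSmem l hl.1).1 (by omega)
        · apply Finset.sum_congr rfl
          intro l hl
          rw [hP1, Finset.mem_filter] at hl
          exact hv1 l (hSmem l hl.1).1 (by omega)
      · have e : ∑ l ∈ PB, β l * φ l = ∑ _l ∈ PB, q := by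
          apply Finset.sum_congr rfl
          intro l hl
          rw [hPB, Finset.mem_filter] at hl
          exact hv2 l hl.2 (hSmem l hl.1).2
        rw [e, Finset.sum_const, nsmul_eq_mul]
    rw [hsum]
    -- bound P2
    have hb2 : ∑ l ∈ P2, φ l ≤ (P2.card : ℝ) * q := by
      have := Finset.sum_le_card_nsmul P2 φ q (by
        intro l hl
        rw [hP2, Finset.mem_filter] at hl
        have h1l := (hSmem l hl.1).1
        refine le_trans (hmono' l (s - r - 1) h1l (by omega) (by omega)) hq2)
      rwa [nsmul_eq_mul] at this
    -- bound P1 vs Icc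
    have hsub1 : P1 ⊆ Finset.Icc (s - r) (s - 1) := by
      intro l hl
      rw [hP1, Finset.mem_filter] at hl
      rw [Finset.mem_Icc]
      omega
    have hc1r : P1.card ≤ r := by
      have := Finset.card_le_card hsub1
      rwa [Nat.card_Icc, show s - 1 + 1 - (s - r) = r by omega] at this
    have hb1 : ∑ l ∈ P1, φ l + ((r : ℝ) - P1.card) * q
        ≤ ∑ l ∈ Finset.Icc (s - r) (s - 1), φ l := by
      rw [← Finset.sum_sdiff hsub1]
      have hcard_sd : (Finset.Icc (s - r) (s - 1) \ P1).card = r - P1.card := by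
        rw [Finset.card_sdiff_of_subset hsub1, Nat.card_Icc,
          show s - 1 + 1 - (s - r) = r by omega]
      have := Finset.card_nsmul_le_sum (Finset.Icc (s - r) (s - 1) \ P1)
        φ q (by
          intro l hl
          have hl' := Finset.mem_sdiff.mp hl |>.1
          rw [Finset.mem_Icc] at hl'
          refine le_trans hq1 (hmono' (s - r) l (by omega) hl'.1 (by omega)))
      rw [hcard_sd, nsmul_eq_mul] at this
      have hcast : ((r - P1.card : ℕ) : ℝ) = (r : ℝ) - P1.card := by
        push_cast [Nat.cast_sub hc1r]; ring
      rw [hcast] at this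
      linarith
    have hcastsum : (P2.card : ℝ) + P1.card + PB.card = (ka : ℝ) := by
      exact_mod_cast congrArg (Nat.cast : ℕ → ℝ) hcards
    have hc1r' : (P1.card : ℝ) ≤ (r : ℝ) := by exact_mod_cast hc1r
    nlinarith [hb2, hb1, hq0, hcastsum]
  · -- lower bound: the witness set
    have hkar : 1 ≤ ka - r := by omega
    have hmem : Finset.Icc (s - r) (s + (ka - r) - 1)
        ∈ (Finset.Icc 1 m).powersetCard ka := by
      rw [Finset.mem_powersetCard]
      constructor
      · apply Finset.Icc_subset_Icc <;> omega
      · rw [Nat.card_Icc]; omega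
    refine le_trans (le_of_eq ?_) (Finset.le_sup' (fun S => ∑ l ∈ S, β l * φ l) hmem)
    have hsplit : Finset.Icc (s - r) (s + (ka - r) - 1)
        = Finset.Icc (s - r) (s - 1) ∪ Finset.Icc s (s + (ka - r) - 1) := by
      ext l
      simp only [Finset.mem_union, Finset.mem_Icc]
      omega
    have hdisj : Disjoint (Finset.Icc (s - r) (s - 1)) (Finset.Icc s (s + (ka - r) - 1)) := by
      rw [Finset.disjoint_left]
      intro a ha ha'
      rw [Finset.mem_Icc] at ha ha'
      omega
    rw [hsplit, Finset.sum_union hdisj]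
    have e1 : ∑ l ∈ Finset.Icc (s - r) (s - 1), β l * φ l
        = ∑ l ∈ Finset.Icc (s - r) (s - 1), φ l := by
      apply Finset.sum_congr rfl
      intro l hl
      rw [Finset.mem_Icc] at hl
      exact hv1 l (by omega) hl.2
    have e2 : ∑ l ∈ Finset.Icc s (s + (ka - r) - 1), β l * φ l
        = ((ka : ℝ) - r) * q := by
      have e : ∑ l ∈ Finset.Icc s (s + (ka - r) - 1), β l * φ l
          = ∑ _l ∈ Finset.Icc s (s + (ka - r) - 1), q := by
        apply Finset.sum_congr rfl
        intro l hl
        rw [Finset.mem_Icc] at hl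
        exact hv2 l hl.1 (by omega)
      rw [e, Finset.sum_const, nsmul_eq_mul,
        Nat.card_Icc, show s + (ka - r) - 1 + 1 - s = ka - r by omega]
      push_cast [Nat.cast_sub (show r ≤ ka by omega)]
      ring
    rw [e1, e2]
    ring
end

section
/- Let 0 < φ_1 ≤ ⋯ ≤ φ_m, let α ∈ [0,1]^m with Σ α = k_a satisfy the optimal structure α_m φ_m = ⋯ = α_s φ_s > α_{s−1} φ_{s−1} ≥ ⋯ ≥ α_{s−r} φ_{s−r} > 0 = α_{s−r−1} = ⋯ = α_1, and suppose s ≤ m − k_d. Then, over all (m − k_d)-element subsets T ⊆ {1,…,m}, the sum Σ_{l∈T} α_l φ_l is minimized by some T containing {1,…,s−1}; moreover, provided s − 1 ≤ m − k_d, if {1,…,s−1} ⊄ T then Σ_{l∈T} α_l φ_l > min over all (m−k_d)-subsets T' of Σ_{l∈T'} α_l φ_l (strict inequality). -/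
/-- Under the optimal structure of the attacker marginals with `s ≤ m − k_d`,
some minimizing `(m−k_d)`-subset `T` of `Σ_{l∈T} α_l φ_l` contains `{1,…,s−1}`; and any
`(m−k_d)`-subset `T` of `{1,…,m}` not containing `{1,…,s−1}` has a strictly larger sum than
the minimum. -/
theorem stmt_18 (m s r ka kd : ℕ) (hs1 : 1 ≤ s) (hsm : s ≤ m - kd) (hr : r ≤ s - 1)
    (hkd : 1 ≤ kd) (hka : 1 ≤ ka)
    (φ α : ℕ → ℝ) (hφpos : ∀ j ∈ Finset.Icc 1 m, 0 < φ j)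
    (hφmono : ∀ i ∈ Finset.Icc 1 m, ∀ j ∈ Finset.Icc 1 m, i ≤ j → φ i ≤ φ j)
    (hα01 : ∀ j ∈ Finset.Icc 1 m, 0 ≤ α j ∧ α j ≤ 1)
    (hαsum : ∑ j ∈ Finset.Icc 1 m, α j = (ka : ℝ))
    (htop : ∀ j, s ≤ j → j ≤ m → α j * φ j = α m * φ m)
    (hstrict : 2 ≤ s → α (s - 1) * φ (s - 1) < α s * φ s)
    (hchain : ∀ i j, s - r ≤ j → j ≤ i → i ≤ s - 1 → α j * φ j ≤ α i * φ i)
    (hpos : 0 < α (s - r) * φ (s - r))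
    (hzero : ∀ j, 1 ≤ j → j < s - r → α j = 0)
    (hneT : ((Finset.Icc 1 m).powersetCard (m - kd)).Nonempty) :
    (∃ T ∈ (Finset.Icc 1 m).powersetCard (m - kd), Finset.Icc 1 (s - 1) ⊆ T ∧
        ∀ T' ∈ (Finset.Icc 1 m).powersetCard (m - kd),
          ∑ l ∈ T, α l * φ l ≤ ∑ l ∈ T', α l * φ l) ∧
    ∀ T ∈ (Finset.Icc 1 m).powersetCard (m - kd), ¬ Finset.Icc 1 (s - 1) ⊆ T →
      ((Finset.Icc 1 m).powersetCard (m - kd)).inf' hneT (fun T' => ∑ l ∈ T', α l * φ l)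
        < ∑ l ∈ T, α l * φ l := by
  set n := m - kd with hn
  set I := Finset.Icc 1 (s - 1) with hI
  have hnm : n ≤ m := Nat.sub_le m kd
  have hsm' : s ≤ m := le_trans hsm hnm
  -- products above s are all equal to the one at s
  have heq : ∀ j, s ≤ j → j ≤ m → α j * φ j = α s * φ s := by
    intro j hj hj'
    rw [htop j hj hj', htop s le_rfl hsm']
  have hps_pos : 0 < α s * φ s := by
    rcases Nat.eq_zero_or_pos r with hr0 | hr1
    · have : s - r = s := by omega
      rwa [this] at hpos
    · have hs2 : 2 ≤ s := by omega
      have h1 := hchain (s - 1) (s - r) (by omega) (by omega) le_rfl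
      have h2 := hstrict hs2
      linarith
  have hlt : ∀ j ∈ I, α j * φ j < α s * φ s := by
    intro j hj
    rw [hI, Finset.mem_Icc] at hj
    have hs2 : 2 ≤ s := by omega
    by_cases hc : s - r ≤ j
    · have h1 := hchain (s - 1) j hc (by omega) le_rfl
      have h2 := hstrict hs2
      linarith
    · have hz := hzero j hj.1 (by omega)
      rw [hz, zero_mul]
      exact hps_pos
  -- splitting lemma
  have split : ∀ T : Finset ℕ, T ⊆ Finset.Icc 1 m →
      ∑ l ∈ T, α l * φ l
        = ∑ l ∈ T ∩ I, α l * φ l + ((T \ I).card : ℝ) * (α s * φ s) := by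
    intro T hT
    have hdis : Disjoint (T \ I) (T ∩ I) := Finset.disjoint_sdiff_inter T I
    have hu : T \ I ∪ T ∩ I = T := Finset.sdiff_union_inter T I
    have hsplit : ∑ l ∈ T, α l * φ l
        = ∑ l ∈ T \ I, α l * φ l + ∑ l ∈ T ∩ I, α l * φ l := by
      rw [← hu, Finset.sum_union hdis, hu]
    rw [hsplit]
    have : ∑ l ∈ T \ I, α l * φ l = ∑ l ∈ T \ I, (α s * φ s) := by
      refine Finset.sum_congr rfl fun l hl => ?_
      rw [Finset.mem_sdiff] at hl
      have hl1 := hT hl.1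
      rw [Finset.mem_Icc] at hl1
      have hls : s ≤ l := by
        by_contra hcon
        exact hl.2 (by rw [hI, Finset.mem_Icc]; omega)
      exact heq l hls hl1.2
    rw [this, Finset.sum_const, nsmul_eq_mul]
    ring
  -- the candidate minimizer
  set T0 : Finset ℕ := Finset.Icc 1 n with hT0
  have hT0sub : T0 ⊆ Finset.Icc 1 m := Finset.Icc_subset_Icc_right hnm
  have hT0card : T0.card = n := by simp [hT0]
  have hT0mem : T0 ∈ (Finset.Icc 1 m).powersetCard n :=
    Finset.mem_powersetCard.mpr ⟨hT0sub, hT0card⟩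
  have hIsub : I ⊆ T0 := by
    rw [hI, hT0]; exact Finset.Icc_subset_Icc_right (by omega)
  have hT0inter : T0 ∩ I = I := Finset.inter_eq_right.mpr hIsub
  have hT0sdcard : (T0 \ I).card = n - (s - 1) := by
    rw [Finset.card_sdiff_of_subset hIsub, hT0card, hI, Nat.card_Icc]
    omega
  have hT0sum : ∑ l ∈ T0, α l * φ l
      = ∑ l ∈ I, α l * φ l + ((n - (s - 1) : ℕ) : ℝ) * (α s * φ s) := by
    rw [split T0 hT0sub, hT0inter, hT0sdcard]
  -- the key comparison
  have key : ∀ T ∈ (Finset.Icc 1 m).powersetCard n,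
      ∑ l ∈ T0, α l * φ l ≤ ∑ l ∈ T, α l * φ l ∧
      (¬ I ⊆ T → ∑ l ∈ T0, α l * φ l < ∑ l ∈ T, α l * φ l) := by
    intro T hT
    rw [Finset.mem_powersetCard] at hT
    obtain ⟨hTsub, hTcard⟩ := hT
    set A := T ∩ I with hA
    set D := I \ A with hD
    have hAI : A ⊆ I := Finset.inter_subset_right
    have hAcard : A.card ≤ s - 1 := by
      calc A.card ≤ I.card := Finset.card_le_card hAI
        _ = s - 1 := by rw [hI, Nat.card_Icc]; omega
    have hAT : A.card ≤ n := by
      calc A.card ≤ T.card := Finset.card_le_card Finset.inter_subset_left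
        _ = n := hTcard
    have hDcard : D.card = (s - 1) - A.card := by
      rw [hD, Finset.card_sdiff_of_subset hAI, hI, Nat.card_Icc]; omega
    have hTsdcard : (T \ I).card = n - A.card := by
      have h : A.card + (T \ I).card = T.card := by
        rw [hA]; exact Finset.card_inter_add_card_sdiff T I
      omega
    have hIsumsplit : ∑ l ∈ I, α l * φ l = ∑ l ∈ A, α l * φ l + ∑ l ∈ D, α l * φ l := by
      rw [hD, Finset.sum_sdiff_eq_sub hAI]; ring
    have hDle : ∑ l ∈ D, α l * φ l ≤ (D.card : ℝ) * (α s * φ s) := by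
      calc ∑ l ∈ D, α l * φ l ≤ ∑ _l ∈ D, (α s * φ s) :=
            Finset.sum_le_sum fun i hi => (hlt i (Finset.mem_sdiff.mp hi).1).le
        _ = (D.card : ℝ) * (α s * φ s) := by rw [Finset.sum_const, nsmul_eq_mul]
    have hTsum : ∑ l ∈ T, α l * φ l
        = ∑ l ∈ A, α l * φ l + ((n - A.card : ℕ) : ℝ) * (α s * φ s) := by
      rw [split T hTsub, hTsdcard]
    have hcast : ((n - A.card : ℕ) : ℝ) = ((n - (s - 1) : ℕ) : ℝ) + (D.card : ℝ) := by
      rw [hDcard]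
      push_cast [Nat.cast_sub hAT, Nat.cast_sub (le_trans (by omega : s - 1 ≤ n) le_rfl),
        Nat.cast_sub hAcard, Nat.cast_sub (show s - 1 ≤ n by omega)]
      ring
    constructor
    · rw [hT0sum, hTsum, hIsumsplit, hcast]
      nlinarith [hDle]
    · intro hns
      have hDne : D.Nonempty := by
        rw [hD, hA]
        rw [Finset.sdiff_nonempty]
        intro hcon
        exact hns fun x hx => (Finset.mem_inter.mp (hcon hx)).1
      have hDlt : ∑ l ∈ D, α l * φ l < (D.card : ℝ) * (α s * φ s) := by
        calc ∑ l ∈ D, α l * φ l < ∑ _l ∈ D, (α s * φ s) :=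
              Finset.sum_lt_sum_of_nonempty hDne fun i hi =>
                hlt i (Finset.mem_sdiff.mp hi).1
          _ = (D.card : ℝ) * (α s * φ s) := by rw [Finset.sum_const, nsmul_eq_mul]
      rw [hT0sum, hTsum, hIsumsplit, hcast]
      nlinarith [hDlt]
  have hmin : ∀ T' ∈ (Finset.Icc 1 m).powersetCard n,
      ∑ l ∈ T0, α l * φ l ≤ ∑ l ∈ T', α l * φ l := fun T' hT' => (key T' hT').1
  have hinf : ((Finset.Icc 1 m).powersetCard n).inf' hneT (fun T' => ∑ l ∈ T', α l * φ l)
      = ∑ l ∈ T0, α l * φ l := by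
    apply le_antisymm
    · exact Finset.inf'_le _ hT0mem
    · exact Finset.le_inf' hneT _ hmin
  refine ⟨⟨T0, hT0mem, hIsub, hmin⟩, ?_⟩
  intro T hT hns
  rw [hinf]
  exact (key T hT).2 hns
end
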